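/- arXiv:1912.02306 — 2 statements merged into one kernel-verified Lean document; each statement's English description precedes it below -/
import Mathlib

section
/- Let ∗ be a finite character star-operation on a domain D. If D is a ∗-almost IRKT, then D is an AGCD-domain if and only if D is a ∗-almost Bézout domain. -/
open FractionalIdeal

variable (D : Type*) (K : Type*) [CommRing D] [IsDomain D] [Field K] [Algebra D K]
  [IsFractionRing D K]

/-- A finite character star-operation on the integral domain `D`, acting on the
nonzero fractional ideals of `D` inside its quotient field `K`. -/
structure StarOperation where
  star : FractionalIdeal (nonZeroDivisors D) K → FractionalIdeal (nonZeroDivisors D) K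
  star_principal : ∀ x : K, x ≠ 0 →
    star (spanSingleton (nonZeroDivisors D) x) = spanSingleton (nonZeroDivisors D) x
  star_smul : ∀ (x : K) (A : FractionalIdeal (nonZeroDivisors D) K), x ≠ 0 → A ≠ 0 →
    star (spanSingleton (nonZeroDivisors D) x * A) = spanSingleton (nonZeroDivisors D) x * star A
  le_star : ∀ A, A ≠ 0 → A ≤ star A
  star_mono : ∀ A B, A ≠ 0 → B ≠ 0 → A ≤ B → star A ≤ star B
  star_star : ∀ A, A ≠ 0 → star (star A) = star A
  finite_character : ∀ A, A ≠ 0 → ∀ x ∈ star A,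
    ∃ B : FractionalIdeal (nonZeroDivisors D) K,
      B ≠ 0 ∧ B ≤ A ∧ (B : Submodule D K).FG ∧ x ∈ star B

/-- A prime ideal of height one: a nonzero prime with no nonzero prime strictly below it. -/
def HeightOnePrime (P : Ideal D) : Prop :=
  P.IsPrime ∧ P ≠ ⊥ ∧ ∀ Q : Ideal D, Q.IsPrime → Q < P → Q = ⊥

/-- Membership of `x : K` in the localization `D_P` viewed inside `K`. -/
def MemLocAt (P : Ideal D) (x : K) : Prop :=
  ∃ a t : D, t ∉ P ∧ x * algebraMap D K t = algebraMap D K a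

/-- An almost valuation ring: for nonzero `a, b` some power `a^n` divides `b^n` or
conversely. -/
def AVRing (R : Type*) [CommRing R] : Prop :=
  ∀ a b : R, a ≠ 0 → b ≠ 0 → ∃ n : ℕ, 0 < n ∧ (a ^ n ∣ b ^ n ∨ b ^ n ∣ a ^ n)

/-- The `v`-operation `A ↦ (A⁻¹)⁻¹` on fractional ideals. -/
noncomputable def vOp (A : FractionalIdeal (nonZeroDivisors D) K) : FractionalIdeal (nonZeroDivisors D) K :=
  (A⁻¹)⁻¹

/-- An integral ideal is a `t`-ideal if it contains `B_v` for every nonzero finitely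
generated subideal `B`. -/
def IsTIdeal (I : Ideal D) : Prop :=
  ∀ B : Ideal D, B ≠ ⊥ → B.FG → B ≤ I →
    vOp D K (B : FractionalIdeal (nonZeroDivisors D) K) ≤ (I : FractionalIdeal (nonZeroDivisors D) K)

/-- Maximal `t`-ideals. -/
def IsTMax (P : Ideal D) : Prop :=
  P ≠ ⊥ ∧ P ≠ ⊤ ∧ IsTIdeal D K P ∧
    ∀ J : Ideal D, J ≠ ⊤ → IsTIdeal D K J → P ≤ J → J = P

/-- An integral ideal is a `w`-ideal if it contains every `x ∈ K` with `xJ ⊆ I` for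
some finitely generated ideal `J` with `J⁻¹ = D`. -/
def IsWIdeal (I : Ideal D) : Prop :=
  ∀ x : K, (∃ J : Ideal D, J.FG ∧ ((J : FractionalIdeal (nonZeroDivisors D) K))⁻¹ = 1 ∧
      spanSingleton (nonZeroDivisors D) x * (J : FractionalIdeal (nonZeroDivisors D) K) ≤
        (I : FractionalIdeal (nonZeroDivisors D) K)) →
    x ∈ (I : FractionalIdeal (nonZeroDivisors D) K)

/-- Maximal `w`-ideals. -/
def IsWMax (P : Ideal D) : Prop :=
  P ≠ ⊥ ∧ P ≠ ⊤ ∧ IsWIdeal D K P ∧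
    ∀ J : Ideal D, J ≠ ⊤ → IsWIdeal D K J → P ≤ J → J = P

/-- `P ∈ Ass(K/D)`: `P` is a prime minimal over a conductor ideal `(aD : bD)`. -/
def InAssKD (P : Ideal D) : Prop :=
  P.IsPrime ∧ ∃ a b : D, a ≠ 0 ∧ b ≠ 0 ∧
    (Ideal.span {a}).colon (Ideal.span {b}) ≤ P ∧
    ∀ Q : Ideal D, Q.IsPrime → (Ideal.span {a}).colon (Ideal.span {b}) ≤ Q → Q ≤ P → Q = P

/-- An AGCD (almost GCD) domain: for all nonzero `a, b` there is `n ≥ 1` with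
`(aⁿ, bⁿ)_v` principal. -/
def IsAGCDDomain : Prop :=
  ∀ a b : D, a ≠ 0 → b ≠ 0 → ∃ n : ℕ, 0 < n ∧ ∃ d : D,
    vOp D K ((Ideal.span {a ^ n, b ^ n} : Ideal D) : FractionalIdeal (nonZeroDivisors D) K) =
      spanSingleton (nonZeroDivisors D) (algebraMap D K d)

/-- `D_P` is an almost valuation domain, for `P` a prime of `D`. -/
def AVAtPrime {D : Type*} [CommRing D] (P : Ideal D) (hP : P.IsPrime) : Prop :=
  AVRing (Localization (@Ideal.primeCompl D _ P hP))

namespace StarOperation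

variable {D K}
variable (s : StarOperation D K)

/-- The star closure of an integral ideal, as an integral ideal. -/
def starI (I : Ideal D) : Ideal D :=
  (s.star (I : FractionalIdeal (nonZeroDivisors D) K) : Submodule D K).comap
    (Algebra.linearMap D K)

/-- An integral `∗`-ideal. -/
def IsStarIdeal (I : Ideal D) : Prop :=
  s.star (I : FractionalIdeal (nonZeroDivisors D) K) = (I : FractionalIdeal (nonZeroDivisors D) K)

/-- A maximal `∗`-ideal: maximal among proper integral `∗`-ideals (such ideals are prime). -/
def IsMaxStarIdeal (P : Ideal D) : Prop :=
  P ≠ ⊥ ∧ P ≠ ⊤ ∧ P.IsPrime ∧ s.IsStarIdeal P ∧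
    ∀ J : Ideal D, J ≠ ⊤ → s.IsStarIdeal J → P ≤ J → J = P

/-- `∗`-invertibility of a fractional ideal. -/
def IsStarInvertible (A : FractionalIdeal (nonZeroDivisors D) K) : Prop :=
  s.star (A * A⁻¹) = 1

/-- `∗`-invertibility of an integral ideal. -/
def IsStarInvertibleI (I : Ideal D) : Prop :=
  s.IsStarInvertible (I : FractionalIdeal (nonZeroDivisors D) K)

/-- A `P`-`∗`-homogeneous ideal: nonzero, finitely generated, contained in the maximal
`∗`-ideal `P` and in no other maximal `∗`-ideal. -/
def IsHomogeneous (P I : Ideal D) : Prop :=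
  I ≠ ⊥ ∧ I.FG ∧ s.IsMaxStarIdeal P ∧ I ≤ P ∧
    ∀ Q : Ideal D, s.IsMaxStarIdeal Q → I ≤ Q → Q = P

/-- A type 1 `∗`-homogeneous ideal: `M(A) = √(A_∗)`. -/
def IsType1 (P I : Ideal D) : Prop := P = (s.starI I).radical

/-- A type 2 `∗`-homogeneous ideal: `A_∗ = (M(A)ⁿ)_∗` for some `n ≥ 1`. -/
def IsType2 (P I : Ideal D) : Prop :=
  ∃ n : ℕ, 0 < n ∧
    s.star (I : FractionalIdeal (nonZeroDivisors D) K) =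
      s.star ((P ^ n : Ideal D) : FractionalIdeal (nonZeroDivisors D) K)

/-- A `P`-`∗`-almost super-homogeneous ideal. -/
def IsAlmostSuperHomogeneous (P I : Ideal D) : Prop :=
  s.IsStarInvertibleI I ∧ s.IsHomogeneous P I ∧
    ∀ (k : ℕ) (b : Fin k → D), (∀ i, b i ∈ P) →
      (∃ r : ℕ, 0 < r ∧ ((I ^ r : Ideal D) : FractionalIdeal (nonZeroDivisors D) K) ≤
        s.star ((Ideal.span (Set.range b) : Ideal D) : FractionalIdeal (nonZeroDivisors D) K)) →
      ∃ n : ℕ, 0 < n ∧ s.IsStarInvertibleI (Ideal.span (Set.range fun i => b i ^ n))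

/-- A `∗`-super-homogeneous ideal: every `∗`-homogeneous ideal containing it is
`∗`-invertible. -/
def IsSuperHomogeneous (P I : Ideal D) : Prop :=
  s.IsHomogeneous P I ∧
    ∀ B Q : Ideal D, s.IsHomogeneous Q B → I ≤ B → s.IsStarInvertibleI B

/-- A `P`-`∗`-afg-homogeneous (almost factorial general homogeneous) ideal. -/
def IsAfgHomogeneous (P I : Ideal D) : Prop :=
  s.IsStarInvertibleI I ∧ s.IsHomogeneous P I ∧
    ∀ (k : ℕ) (b : Fin k → D), (∀ i, b i ∈ P) →
      (∃ r : ℕ, 0 < r ∧ ((I ^ r : Ideal D) : FractionalIdeal (nonZeroDivisors D) K) ≤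
        s.star ((Ideal.span (Set.range b) : Ideal D) : FractionalIdeal (nonZeroDivisors D) K)) →
      ∃ n : ℕ, 0 < n ∧ ∃ d : D,
        s.star ((Ideal.span (Set.range fun i => b i ^ n) : Ideal D) :
            FractionalIdeal (nonZeroDivisors D) K) =
          spanSingleton (nonZeroDivisors D) (algebraMap D K d)

/-- A `∗`-af-homogeneous ideal: every `∗`-homogeneous ideal containing it has a power
whose `∗`-closure is principal. -/
def IsAfHomogeneous (P I : Ideal D) : Prop :=
  s.IsHomogeneous P I ∧
    ∀ B Q : Ideal D, s.IsHomogeneous Q B → I ≤ B →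
      ∃ n : ℕ, 0 < n ∧ ∃ d : D,
        s.star ((B ^ n : Ideal D) : FractionalIdeal (nonZeroDivisors D) K) =
          spanSingleton (nonZeroDivisors D) (algebraMap D K d)

/-- `D` is a `∗`-SH domain with respect to a property of ideals: every nonzero proper
principal ideal is a `∗`-product of ideals with the given property. -/
def IsSHWith (prop : Ideal D → Prop) : Prop :=
  ∀ x : D, x ≠ 0 → ¬IsUnit x →
    ∃ (k : ℕ) (A : Fin k → Ideal D), (∀ i, prop (A i)) ∧
      s.star ((∏ i, A i : Ideal D) : FractionalIdeal (nonZeroDivisors D) K) =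
        ((Ideal.span {x} : Ideal D) : FractionalIdeal (nonZeroDivisors D) K)

/-- A `∗`-almost super-SH domain. -/
def IsAlmostSuperSH : Prop :=
  s.IsSHWith fun I => ∃ P, s.IsAlmostSuperHomogeneous P I

/-- Finite character: every nonzero nonunit lies in only finitely many maximal
`∗`-ideals. -/
def FiniteCharacterDom : Prop :=
  ∀ x : D, x ≠ 0 → ¬IsUnit x → {P : Ideal D | s.IsMaxStarIdeal P ∧ x ∈ P}.Finite

/-- Independence: no two distinct maximal `∗`-ideals contain a common nonzero prime. -/
def IndependentDom : Prop :=
  ∀ P Q : Ideal D, s.IsMaxStarIdeal P → s.IsMaxStarIdeal Q → P ≠ Q →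
    ∀ L : Ideal D, L.IsPrime → L ≠ ⊥ → ¬(L ≤ P ∧ L ≤ Q)

/-- A `∗`-h-local domain. -/
def IsHLocal : Prop := s.FiniteCharacterDom ∧ s.IndependentDom

/-- A `∗`-almost independent ring of Krull type. -/
def IsAlmostIRKT : Prop :=
  s.IsHLocal ∧ ∀ (P : Ideal D) (h : s.IsMaxStarIdeal P), AVAtPrime P h.2.2.1

/-- A `∗`-almost generalized Krull domain. -/
def IsAGKD : Prop :=
  (∀ x : K, (∀ P : Ideal D, HeightOnePrime D P → MemLocAt D K P x) →
      ∃ d : D, algebraMap D K d = x) ∧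
  (∀ x : D, x ≠ 0 → ¬IsUnit x → {P : Ideal D | HeightOnePrime D P ∧ x ∈ P}.Finite) ∧
  (∀ P : Ideal D, s.IsMaxStarIdeal P ↔ HeightOnePrime D P) ∧
  (∀ (P : Ideal D) (h : s.IsMaxStarIdeal P), AVAtPrime P h.2.2.1)

/-- A `∗`-Krull domain: `∗`-h-local, `∗-Max(D) = X⁽¹⁾(D)`, and `D_P` is a DVR for each
maximal `∗`-ideal `P`. -/
def IsStarKrull : Prop :=
  s.IsHLocal ∧ (∀ P : Ideal D, s.IsMaxStarIdeal P ↔ HeightOnePrime D P) ∧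
    ∀ (P : Ideal D) (h : s.IsMaxStarIdeal P),
      @IsDiscreteValuationRing (Localization (@Ideal.primeCompl D _ P h.2.2.1)) _
        (IsLocalization.isDomain_localization (@Ideal.primeCompl_le_nonZeroDivisors D _ _ P h.2.2.1))

/-- A `∗`-almost Bézout domain. -/
def IsAlmostBezout : Prop :=
  ∀ a b : D, a ≠ 0 → b ≠ 0 → ∃ n : ℕ, 0 < n ∧ ∃ d : D,
    s.star ((Ideal.span {a ^ n, b ^ n} : Ideal D) : FractionalIdeal (nonZeroDivisors D) K) =
      spanSingleton (nonZeroDivisors D) (algebraMap D K d)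

/-- The `∗`-class group `Cl_∗(D)` is torsion: every `∗`-invertible fractional ideal has a
power whose `∗`-closure is principal. -/
def HasTorsionClassGroup : Prop :=
  ∀ A : FractionalIdeal (nonZeroDivisors D) K, A ≠ 0 → s.IsStarInvertible A →
    ∃ n : ℕ, 0 < n ∧ ∃ x : K, s.star (A ^ n) = spanSingleton (nonZeroDivisors D) x

end StarOperation

variable {D : Type*} {K : Type*} [CommRing D] [IsDomain D] [Field K] [Algebra D K]
  [IsFractionRing D K]

open StarOperation

/-!
At a maximal `∗`-ideal `P` the ring `D_P` is an almost valuation domain, so some power makes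
`(aⁿ, bⁿ)` locally principal at `P`; as only finitely many maximal `∗`-ideals contain `a`, a
single exponent `N` works at all of them. Then `X = (a^N, b^N)` is `∗`-invertible, since
`X X⁻¹` lies in no maximal `∗`-ideal, and for a `∗`-invertible ideal `X_v ⊆ X_∗`; so if `X_v`
is principal, so is `X_∗`. Conversely `A⁻¹ = (A_∗)⁻¹` for every star-operation, hence a
principal `A_∗` gives `A_v = A_∗`.
-/

section Localization

variable {R : Type*} [CommRing R]

/-- `a ∣ b` in the localization `R_P`, with the denominator cleared. -/
def DvdAt (P : Ideal R) (a b : R) : Prop := ∃ t c : R, t ∉ P ∧ t * b = a * c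

theorem dvdAt_of_notMem {P : Ideal R} {a : R} (ha : a ∉ P) (b : R) : DvdAt P a b :=
  ⟨a, b, ha, rfl⟩

theorem DvdAt.pow {P : Ideal R} [P.IsPrime] {a b : R} (h : DvdAt P a b) (k : ℕ) :
    DvdAt P (a ^ k) (b ^ k) := by
  obtain ⟨t, c, ht, htc⟩ := h
  exact ⟨t ^ k, c ^ k, fun hk => ht (Ideal.IsPrime.mem_of_pow_mem ‹_› k hk), by
    rw [← mul_pow, htc, mul_pow]⟩

theorem DvdAt.pow_of_dvd {P : Ideal R} [P.IsPrime] {a b : R} {m n : ℕ}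
    (h : DvdAt P (a ^ m) (b ^ m)) (hmn : m ∣ n) : DvdAt P (a ^ n) (b ^ n) := by
  obtain ⟨k, rfl⟩ := hmn
  simpa only [pow_mul] using h.pow k

theorem dvdAt_of_algebraMap_dvd {P : Ideal R} [P.IsPrime] {a b : R}
    (h : algebraMap R (Localization.AtPrime P) a ∣ algebraMap R (Localization.AtPrime P) b) :
    DvdAt P a b := by
  obtain ⟨q, hq⟩ := h
  obtain ⟨⟨c, t⟩, hct⟩ := IsLocalization.surj P.primeCompl q
  obtain ⟨u, hu⟩ := IsLocalization.exists_of_eq (M := P.primeCompl)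
    (S := Localization.AtPrime P) (x := t * b) (y := a * c) (by
      rw [map_mul, map_mul, hq, ← hct]; ring)
  refine ⟨u * t, u * c, P.primeCompl.mul_mem u.2 t.2, ?_⟩
  linear_combination hu

variable [IsDomain R]

theorem exists_dvdAt_pow_of_avAtPrime {P : Ideal R} (hP : P.IsPrime) (hAV : AVAtPrime P hP)
    {a b : R} (ha : a ≠ 0) (hb : b ≠ 0) :
    ∃ m, 0 < m ∧ (DvdAt P (a ^ m) (b ^ m) ∨ DvdAt P (b ^ m) (a ^ m)) := by
  have hinj : Function.Injective (algebraMap R (Localization.AtPrime P)) :=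
    IsLocalization.injective _ P.primeCompl_le_nonZeroDivisors
  obtain ⟨m, hm, hdvd⟩ := hAV _ _ ((map_ne_zero_iff _ hinj).2 ha) ((map_ne_zero_iff _ hinj).2 hb)
  simp only [← map_pow] at hdvd
  exact ⟨m, hm, hdvd.imp dvdAt_of_algebraMap_dvd dvdAt_of_algebraMap_dvd⟩

end Localization

open scoped nonZeroDivisors

namespace FractionalIdeal

section

variable {R L : Type*} [CommRing R] [Field L] [Algebra R L]

instance : NoZeroDivisors (FractionalIdeal R⁰ L) where
  eq_zero_or_eq_zero_of_mul_eq_zero {A B} hAB := by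
    refine or_iff_not_imp_left.2 fun hA => eq_zero_iff.2 fun y hy => ?_
    obtain ⟨x, hx, hx0⟩ : ∃ x ∈ A, x ≠ 0 := by simpa [eq_zero_iff] using hA
    exact (mul_eq_zero.1 (eq_zero_iff.1 hAB _ (mul_mem_mul hx hy))).resolve_left hx0

variable [IsFractionRing R L]

theorem algebraMap_mem_coeIdeal {I : Ideal R} {x : R} :
    algebraMap R L x ∈ (I : FractionalIdeal R⁰ L) ↔ x ∈ I := by
  refine ⟨fun h => ?_, mem_coeIdeal_of_mem _⟩
  obtain ⟨y, hy, hyx⟩ := (mem_coeIdeal _).1 h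
  rwa [← IsFractionRing.injective R L hyx]

theorem coeIdeal_span_pair_ne_zero {x y : R} (hx : x ≠ 0) :
    ((Ideal.span {x, y} : Ideal R) : FractionalIdeal R⁰ L) ≠ 0 :=
  coeIdeal_ne_zero.2 fun h => hx (by simpa [h] using Ideal.subset_span (Set.mem_insert x {y}))

variable [IsDomain R]

theorem inv_ne_zero_of_ne_zero {A : FractionalIdeal R⁰ L} (hA : A ≠ 0) : A⁻¹ ≠ 0 := fun h => by
  have hden := den_mem_inv hA
  rw [h, mem_zero_iff] at hden
  exact IsFractionRing.to_map_ne_zero_of_mem_nonZeroDivisors A.den.2 hden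

theorem mul_inv_le_one (A : FractionalIdeal R⁰ L) : A * A⁻¹ ≤ 1 :=
  mul_one_div_le_one (I := A)

theorem le_inv_inv (A : FractionalIdeal R⁰ L) : A ≤ A⁻¹⁻¹ := by
  rcases eq_or_ne A 0 with rfl | hA
  · exact bot_le
  change A ≤ 1 / A⁻¹
  rw [le_div_iff_mul_le (inv_ne_zero_of_ne_zero hA)]
  exact mul_inv_le_one A

/-- The witness is `t / x`, which lies in `(x, y)⁻¹` because it maps `x` to `t` and `y` to `c`. -/
theorem algebraMap_mem_coeIdeal_span_pair_mul_inv {x y t c : R} (hx : x ≠ 0)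
    (h : t * y = x * c) :
    algebraMap R L t ∈ ((Ideal.span {x, y} : Ideal R) : FractionalIdeal R⁰ L) *
      (Ideal.span {x, y} : FractionalIdeal R⁰ L)⁻¹ := by
  have hx' : algebraMap R L x ≠ 0 := (map_ne_zero_iff _ (IsFractionRing.injective R L)).2 hx
  have hy : algebraMap R L t / algebraMap R L x * algebraMap R L y = algebraMap R L c := by
    rw [div_mul_eq_mul_div, div_eq_iff hx', ← map_mul, ← map_mul, h, mul_comm]
  have hz :
      algebraMap R L t / algebraMap R L x ∈ (Ideal.span {x, y} : FractionalIdeal R⁰ L)⁻¹ := by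
    refine (mem_inv_iff (coeIdeal_span_pair_ne_zero hx)).2 fun w hw => ?_
    obtain ⟨v, hv, rfl⟩ := (mem_coeIdeal _).1 hw
    obtain ⟨r, r', rfl⟩ := Ideal.mem_span_pair.1 hv
    refine (mem_one_iff _).2 ⟨r * t + r' * c, ?_⟩
    rw [map_add, map_mul, map_mul, map_add, map_mul, map_mul, ← hy]
    field_simp
  have hmem := mul_mem_mul (algebraMap_mem_coeIdeal.2
    (Ideal.subset_span (Set.mem_insert x {y}))) hz
  rwa [mul_div_cancel₀ _ hx'] at hmem

end

end FractionalIdeal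

namespace StarOperation

variable {R L : Type*} [CommRing R] [Field L] [Algebra R L] [IsFractionRing R L]
  (s : StarOperation R L)

theorem star_one : s.star 1 = 1 := by
  simpa using s.star_principal 1 one_ne_zero

theorem star_le_one {A : FractionalIdeal R⁰ L} (hA : A ≠ 0) (h : A ≤ 1) : s.star A ≤ 1 :=
  s.star_one ▸ s.star_mono A 1 hA one_ne_zero h

variable {s}

theorem coeIdeal_starI {I : Ideal R} (hI : I ≠ ⊥) :
    (s.starI I : FractionalIdeal R⁰ L) = s.star I := by
  obtain ⟨J, hJ⟩ :=
    le_one_iff_exists_coeIdeal.1 (s.star_le_one (coeIdeal_ne_zero.2 hI) coeIdeal_le_one)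
  suffices s.starI I = J by rw [this, hJ]
  ext x
  rw [starI, ← hJ]
  exact algebraMap_mem_coeIdeal

theorem le_starI {I : Ideal R} (hI : I ≠ ⊥) : I ≤ s.starI I :=
  (coeIdeal_le_coeIdeal L).1
    ((coeIdeal_starI (s := s) hI).symm ▸ s.le_star _ (coeIdeal_ne_zero.2 hI))

theorem isStarIdeal_starI {I : Ideal R} (hI : I ≠ ⊥) : s.IsStarIdeal (s.starI I) := by
  rw [IsStarIdeal, coeIdeal_starI hI, s.star_star _ (coeIdeal_ne_zero.2 hI)]

variable (s)

theorem mul_star_le_star_mul {A B : FractionalIdeal R⁰ L} (hA : A ≠ 0) (hB : B ≠ 0) :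
    A * s.star B ≤ s.star (A * B) := by
  refine mul_le.2 fun x hx y hy => ?_
  rcases eq_or_ne x 0 with rfl | hx0
  · simpa using FractionalIdeal.zero_mem _
  have hxy : x * y ∈ s.star (spanSingleton R⁰ x * B) := by
    rw [s.star_smul x B hx0 hB]
    exact mul_mem_mul (mem_spanSingleton_self _ x) hy
  exact s.star_mono _ _ (mul_ne_zero (spanSingleton_ne_zero_iff.2 hx0) hB) (mul_ne_zero hA hB)
    (mul_le_mul_left (spanSingleton_le_iff_mem.2 hx) B) hxy

variable {s}

theorem star_ne_zero {A : FractionalIdeal R⁰ L} (hA : A ≠ 0) : s.star A ≠ 0 :=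
  fun h => hA (le_bot_iff.1 ((s.le_star A hA).trans_eq h))

/-- If `xy ∈ P` and `x ∉ P`, maximality forces `(P + xR)_∗ = R`, whence
`y ∈ (yP + xyR)_∗ ⊆ P_∗ = P`. -/
theorem isPrime_of_maximal {P : Ideal R} (hP0 : P ≠ ⊥) (hPtop : P ≠ ⊤) (hP : s.IsStarIdeal P)
    (hmax : ∀ J : Ideal R, J ≠ ⊤ → s.IsStarIdeal J → P ≤ J → J = P) : P.IsPrime := by
  refine ⟨hPtop, fun {x y} hxy => or_iff_not_imp_left.2 fun hx => ?_⟩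
  rcases eq_or_ne y 0 with rfl | hy0
  · exact P.zero_mem
  set T := P ⊔ Ideal.span {x}
  have hT0 : T ≠ ⊥ := ne_bot_of_le_ne_bot hP0 le_sup_left
  have hT : s.starI T = ⊤ := by
    by_contra hne
    have hTP := hmax _ hne (isStarIdeal_starI hT0) (le_sup_left.trans (le_starI hT0))
    exact hx (hTP ▸ le_starI hT0 (Ideal.mem_sup_right (Ideal.mem_span_singleton_self x)))
  have hy' : algebraMap R L y ≠ 0 := (map_ne_zero_iff _ (IsFractionRing.injective R L)).2 hy0
  have hyT0 : spanSingleton R⁰ (algebraMap R L y) * (T : FractionalIdeal R⁰ L) ≠ 0 :=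
    mul_ne_zero (spanSingleton_ne_zero_iff.2 hy') (coeIdeal_ne_zero.2 hT0)
  have hyT : spanSingleton R⁰ (algebraMap R L y) * (T : FractionalIdeal R⁰ L) ≤ P := by
    rw [← coeIdeal_span_singleton, ← coeIdeal_mul, coeIdeal_le_coeIdeal, Ideal.mul_sup,
      Ideal.span_singleton_mul_span_singleton, mul_comm y]
    exact sup_le Ideal.mul_le_right ((Ideal.span_singleton_le_iff_mem P).2 hxy)
  have hy : algebraMap R L y ∈ s.star (spanSingleton R⁰ (algebraMap R L y) * T) := by
    rw [s.star_smul _ _ hy' (coeIdeal_ne_zero.2 hT0), ← coeIdeal_starI hT0, hT, coeIdeal_top,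
      mul_one]
    exact mem_spanSingleton_self _ _
  have hyP := s.star_mono _ _ hyT0 (coeIdeal_ne_zero.2 hP0) hyT hy
  rw [hP] at hyP
  exact algebraMap_mem_coeIdeal.1 hyP

/-- By finite character, membership in `(sSup c)_∗` is witnessed by a finitely generated
subideal, which already lies in a single member of `c`. -/
theorem isStarIdeal_sSup {c : Set (Ideal R)} (hc : c.Nonempty) (hdir : DirectedOn (· ≤ ·) c)
    (hstar : ∀ J ∈ c, s.IsStarIdeal J) (h0 : sSup c ≠ ⊥) : s.IsStarIdeal (sSup c) := by
  have hU0 : ((sSup c : Ideal R) : FractionalIdeal R⁰ L) ≠ 0 := coeIdeal_ne_zero.2 h0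
  refine le_antisymm (fun w hw => ?_) (s.le_star _ hU0)
  obtain ⟨B, hB0, hBU, hBfg, hwB⟩ := s.finite_character _ hU0 w hw
  obtain ⟨I, rfl⟩ := le_one_iff_exists_coeIdeal.1 (hBU.trans coeIdeal_le_one)
  have hIfg : I.FG := Submodule.fg_of_fg_map_injective (Algebra.linearMap R L)
    (IsFractionRing.injective R L) (by rwa [coe_coeIdeal] at hBfg)
  obtain ⟨J, hJc, hIJ⟩ := (CompleteLattice.isCompactElement_iff_le_of_directed_sSup_le _ I).1
    ((Submodule.fg_iff_compact I).1 hIfg) c hc hdir ((coeIdeal_le_coeIdeal L).1 hBU)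
  have hJ0 : (J : FractionalIdeal R⁰ L) ≠ 0 :=
    coeIdeal_ne_zero.2 (ne_bot_of_le_ne_bot (coeIdeal_ne_zero.1 hB0) hIJ)
  have hwJ := s.star_mono _ _ hB0 hJ0 ((coeIdeal_le_coeIdeal L).2 hIJ) hwB
  rw [hstar J hJc] at hwJ
  exact (coeIdeal_le_coeIdeal L).2 (le_sSup hJc) hwJ

theorem exists_isMaxStarIdeal_le {I : Ideal R} (h0 : I ≠ ⊥) (htop : I ≠ ⊤)
    (hI : s.IsStarIdeal I) : ∃ P, s.IsMaxStarIdeal P ∧ I ≤ P := by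
  have hchain : ∀ c ⊆ {J | J ≠ ⊤ ∧ s.IsStarIdeal J ∧ I ≤ J}, IsChain (· ≤ ·) c →
      ∀ J₀ ∈ c, ∃ U ∈ {J | J ≠ ⊤ ∧ s.IsStarIdeal J ∧ I ≤ J}, ∀ J ∈ c, J ≤ U := by
    intro c hcS hc J₀ hJ₀
    have hIU : I ≤ sSup c := (hcS hJ₀).2.2.trans (le_sSup hJ₀)
    refine ⟨sSup c, ⟨?_, isStarIdeal_sSup ⟨J₀, hJ₀⟩ hc.directedOn (fun J hJ => (hcS hJ).2.1)
      (ne_bot_of_le_ne_bot h0 hIU), hIU⟩, fun J => le_sSup⟩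
    rw [Ne, Ideal.eq_top_iff_one, Submodule.mem_sSup_of_directed ⟨J₀, hJ₀⟩ hc.directedOn]
    rintro ⟨J, hJc, hJ1⟩
    exact (hcS hJc).1 ((Ideal.eq_top_iff_one J).2 hJ1)
  obtain ⟨P, hIP, hP⟩ := zorn_le_nonempty₀ _ hchain I ⟨htop, hI, le_rfl⟩
  have hP0 := ne_bot_of_le_ne_bot h0 hIP
  have hmax : ∀ J, J ≠ ⊤ → s.IsStarIdeal J → P ≤ J → J = P := fun J hJ hJs hPJ =>
    (hP.eq_of_le ⟨hJ, hJs, hIP.trans hPJ⟩ hPJ).symm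
  exact ⟨P, ⟨hP0, hP.prop.1, isPrime_of_maximal hP0 hP.prop.1 hP.prop.2.1 hmax,
    hP.prop.2.1, hmax⟩, hIP⟩

theorem star_eq_one_of_forall_not_le {A : FractionalIdeal R⁰ L} (hA0 : A ≠ 0) (hA1 : A ≤ 1)
    (h : ∀ P, s.IsMaxStarIdeal P → ¬A ≤ P) : s.star A = 1 := by
  obtain ⟨I, rfl⟩ := le_one_iff_exists_coeIdeal.1 hA1
  have hI0 : I ≠ ⊥ := coeIdeal_ne_zero.1 hA0
  rw [← coeIdeal_starI hI0]
  by_contra hne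
  have htop : s.starI I ≠ ⊤ := fun h => hne (by rw [h, coeIdeal_top])
  obtain ⟨P, hP, hIP⟩ := exists_isMaxStarIdeal_le (ne_bot_of_le_ne_bot hI0 (le_starI hI0)) htop
    (isStarIdeal_starI hI0)
  exact h P hP ((coeIdeal_le_coeIdeal L).2 ((le_starI hI0).trans hIP))

theorem finite_setOf_isMaxStarIdeal_mem (hfin : s.FiniteCharacterDom) {a : R} (ha : a ≠ 0) :
    {P | s.IsMaxStarIdeal P ∧ a ∈ P}.Finite := by
  by_cases hu : IsUnit a
  · exact Set.finite_empty.subset fun P hP => hP.1.2.1 (Ideal.eq_top_of_isUnit_mem P hP.2 hu)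
  · exact hfin a ha hu

variable (s) [IsDomain R]

theorem inv_star {A : FractionalIdeal R⁰ L} (hA : A ≠ 0) : (s.star A)⁻¹ = A⁻¹ := by
  refine le_antisymm (inv_anti_mono hA (star_ne_zero hA) (s.le_star A hA)) ?_
  change A⁻¹ ≤ 1 / s.star A
  rw [le_div_iff_mul_le (star_ne_zero hA)]
  calc A⁻¹ * s.star A ≤ s.star (A⁻¹ * A) := s.mul_star_le_star_mul (inv_ne_zero_of_ne_zero hA) hA
    _ ≤ 1 := s.star_le_one (mul_ne_zero (inv_ne_zero_of_ne_zero hA) hA)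
        (mul_comm A A⁻¹ ▸ mul_inv_le_one A)

theorem vOp_eq_of_star_eq_spanSingleton {A : FractionalIdeal R⁰ L} (hA : A ≠ 0) {z : L}
    (h : s.star A = spanSingleton R⁰ z) : vOp R L A = spanSingleton R⁰ z := by
  rw [vOp, ← s.inv_star hA, h, spanSingleton_inv, spanSingleton_inv, inv_inv]

/-- For `y ∈ A_v` we have `y A⁻¹ ⊆ R`, so `y ∈ y (A A⁻¹)_∗ = (y A A⁻¹)_∗ ⊆ A_∗`. -/
theorem vOp_le_star {A : FractionalIdeal R⁰ L} (hA : A ≠ 0) (hinv : s.IsStarInvertible A) :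
    vOp R L A ≤ s.star A := by
  intro y hy
  rcases eq_or_ne y 0 with rfl | hy0
  · exact FractionalIdeal.zero_mem _
  have hAA : A * A⁻¹ ≠ 0 := mul_ne_zero hA (inv_ne_zero_of_ne_zero hA)
  have hyA : spanSingleton R⁰ y * A⁻¹ ≤ 1 :=
    (le_div_iff_mul_le (inv_ne_zero_of_ne_zero hA)).1 (spanSingleton_le_iff_mem.2 hy)
  have hyAA : spanSingleton R⁰ y * (A * A⁻¹) ≤ A := by
    rw [mul_comm A, ← mul_assoc]
    simpa using mul_le_mul_left hyA A
  have hystar := s.star_mono _ _ (mul_ne_zero (spanSingleton_ne_zero_iff.2 hy0) hAA) hA hyAA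
  rw [s.star_smul y _ hy0 hAA, hinv, mul_one] at hystar
  exact hystar (mem_spanSingleton_self _ y)

theorem star_eq_of_vOp_eq_spanSingleton {A : FractionalIdeal R⁰ L} (hA : A ≠ 0)
    (hinv : s.IsStarInvertible A) {z : L} (h : vOp R L A = spanSingleton R⁰ z) :
    s.star A = spanSingleton R⁰ z := by
  have hAz : A ≤ spanSingleton R⁰ z := h ▸ le_inv_inv A
  have hz : z ≠ 0 := by
    rintro rfl
    exact hA (le_bot_iff.1 (by simpa using hAz))
  refine le_antisymm ?_ (h ▸ s.vOp_le_star hA hinv)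
  rw [← s.star_principal z hz]
  exact s.star_mono _ _ hA (spanSingleton_ne_zero_iff.2 hz) hAz

/-- Locally at every maximal `∗`-ideal `P` the ideal `(x, y)` is generated by `x` or by `y`, so
`(x, y)(x, y)⁻¹` lies in no maximal `∗`-ideal. -/
theorem isStarInvertible_span_pair {x y : R} (hx : x ≠ 0) (hy : y ≠ 0)
    (hloc : ∀ P, s.IsMaxStarIdeal P → DvdAt P x y ∨ DvdAt P y x) :
    s.IsStarInvertible (Ideal.span {x, y} : FractionalIdeal R⁰ L) := by
  have hX0 := coeIdeal_span_pair_ne_zero (L := L) (y := y) hx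
  refine s.star_eq_one_of_forall_not_le (mul_ne_zero hX0 (inv_ne_zero_of_ne_zero hX0))
    (mul_inv_le_one _) fun P hP hle => ?_
  rcases hloc P hP with ⟨t, c, ht, htc⟩ | ⟨t, c, ht, htc⟩
  · exact ht (algebraMap_mem_coeIdeal.1 (hle (algebraMap_mem_coeIdeal_span_pair_mul_inv hx htc)))
  · rw [Set.pair_comm] at hle
    exact ht (algebraMap_mem_coeIdeal.1 (hle (algebraMap_mem_coeIdeal_span_pair_mul_inv hy htc)))

/-- Only the finitely many maximal `∗`-ideals containing `a` need a nontrivial exponent, so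
the product of these exponents works everywhere. -/
theorem exists_dvdAt_pow_of_finiteCharacterDom (hfin : s.FiniteCharacterDom)
    (hAV : ∀ (P : Ideal R) (h : s.IsMaxStarIdeal P), AVAtPrime P h.2.2.1)
    {a b : R} (ha : a ≠ 0) (hb : b ≠ 0) :
    ∃ N, 0 < N ∧ ∀ k P, s.IsMaxStarIdeal P →
      DvdAt P (a ^ (N * k)) (b ^ (N * k)) ∨ DvdAt P (b ^ (N * k)) (a ^ (N * k)) := by
  classical
  have hexp : ∀ P, ∃ m, 0 < m ∧ (s.IsMaxStarIdeal P →
      DvdAt P (a ^ m) (b ^ m) ∨ DvdAt P (b ^ m) (a ^ m)) := by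
    intro P
    by_cases hP : s.IsMaxStarIdeal P
    · obtain ⟨m, hm, h⟩ := exists_dvdAt_pow_of_avAtPrime hP.2.2.1 (hAV P hP) ha hb
      exact ⟨m, hm, fun _ => h⟩
    · exact ⟨1, one_pos, fun h => absurd h hP⟩
  choose m hm0 hmP using hexp
  set S := (finite_setOf_isMaxStarIdeal_mem hfin ha).toFinset
  refine ⟨∏ P ∈ S, m P, Finset.prod_pos fun P _ => hm0 P, fun k P hP => ?_⟩
  have hPprime := hP.2.2.1
  by_cases haP : a ∈ P
  · have hdvd : m P ∣ (∏ Q ∈ S, m Q) * k :=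
      (Finset.dvd_prod_of_mem m (by simp [S, hP, haP])).mul_right k
    exact (hmP P hP).imp (·.pow_of_dvd hdvd) (·.pow_of_dvd hdvd)
  · exact Or.inl (dvdAt_of_notMem (fun h => haP (hPprime.mem_of_pow_mem _ h)) _)

end StarOperation

theorem stmt14 (s : StarOperation D K) (h : s.IsAlmostIRKT) :
    IsAGCDDomain D K ↔ s.IsAlmostBezout := by
  refine ⟨fun hAGCD a b ha hb => ?_, fun hBez a b ha hb => ?_⟩
  · obtain ⟨N, hN, hloc⟩ := s.exists_dvdAt_pow_of_finiteCharacterDom h.1.1 h.2 ha hb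
    obtain ⟨r, hr, d, hd⟩ := hAGCD (a ^ N) (b ^ N) (pow_ne_zero N ha) (pow_ne_zero N hb)
    simp only [← pow_mul] at hd
    have hinv := s.isStarInvertible_span_pair (pow_ne_zero (N * r) ha) (pow_ne_zero _ hb) (hloc r)
    exact ⟨N * r, Nat.mul_pos hN hr, d,
      s.star_eq_of_vOp_eq_spanSingleton (coeIdeal_span_pair_ne_zero (pow_ne_zero _ ha)) hinv hd⟩
  · obtain ⟨n, hn, d, hd⟩ := hBez a b ha hb
    exact ⟨n, hn, d,
      s.vOp_eq_of_star_eq_spanSingleton (coeIdeal_span_pair_ne_zero (pow_ne_zero n ha)) hd⟩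
end

section
/- Let D = F[X^2, X^3] = F + X^2 F[X] where F is a field of characteristic 2. Then D is an almost GCD-domain which is not integrally closed. -/
open FractionalIdeal

variable (D : Type*) (K : Type*) [CommRing D] [IsDomain D] [Field K] [Algebra D K]
  [IsFractionRing D K]

variable {D : Type*} {K : Type*} [CommRing D] [IsDomain D] [Field K] [Algebra D K]
  [IsFractionRing D K]

open StarOperation

/-! In characteristic 2 the ring `D = F[X², X³]`, the polynomials without linear term, contains
every square. Given nonzero `a, b ∈ D`, write `a = g a'`, `b = g b'` with `a', b'` coprime in
`F[X]`; then `a² = g² a'²` and `b² = g² b'²` with all factors in `D`, and `(a'², b'²)⁻¹ = D`: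
if `u b'² = v a'²` with `u, v ∈ D`, then `u = a'² p` and `v = b'² p`, and the linear
coefficients `a'(0)² p₁`, `b'(0)² p₁` of `u, v` vanish, which forces `p₁ = 0` because `a'(0)`
and `b'(0)` are not both zero. Hence `(a², b²)_v = g² D`. Finally `(X²)² ∣ (X³)²` in `D` while
`X² ∤ X³`, so `D` is not integrally closed. -/

open scoped nonZeroDivisors

namespace FractionalIdeal

theorem inv_spanSingleton_mul {x : K} (hx : x ≠ 0) (I : FractionalIdeal D⁰ K) :
    (spanSingleton D⁰ x * I)⁻¹ = spanSingleton D⁰ x⁻¹ * I⁻¹ := by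
  rcases eq_or_ne I 0 with rfl | hI
  · simp only [inv_zero', mul_zero]
  have hxI : spanSingleton D⁰ x * I ≠ 0 := fun h => hI <| by
    rw [← one_mul I, ← spanSingleton_inv_mul K hx, mul_assoc, h, mul_zero]
  ext y
  rw [mem_inv_iff hxI, mem_singleton_mul]
  constructor
  · intro hy
    refine ⟨x * y, (mem_inv_iff hI).mpr fun i hi => ?_, by field_simp⟩
    simpa [mul_assoc, mul_left_comm] using hy (x * i) (mem_singleton_mul.mpr ⟨i, hi, rfl⟩)
  · rintro ⟨w, hw, rfl⟩ z hz
    obtain ⟨i, hi, rfl⟩ := mem_singleton_mul.mp hz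
    have := (mem_inv_iff hI).mp hw i hi
    rwa [show x⁻¹ * w * (x * i) = w * i by field_simp]

theorem coeIdeal_span_pair_inv_eq_one {a b : D} (ha : a ≠ 0)
    (h : ∀ u v : D, u * b = v * a → a ∣ u) :
    ((Ideal.span {a, b} : Ideal D) : FractionalIdeal D⁰ K)⁻¹ = 1 := by
  have hI : ((Ideal.span {a, b} : Ideal D) : FractionalIdeal D⁰ K) ≠ 0 := by
    rw [coeIdeal_ne_zero, Ne, Ideal.span_eq_bot]
    simp [ha]
  have haK : algebraMap D K a ≠ 0 := IsFractionRing.to_map_eq_zero_iff.not.mpr ha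
  refine le_antisymm (fun x hx => ?_) ?_
  · have hmem : ∀ c ∈ ({a, b} : Set D), ∃ u : D, algebraMap D K u = x * algebraMap D K c :=
      fun c hc => (mem_one_iff _).mp <| (mem_inv_iff hI).mp hx _
        ((mem_coeIdeal _).mpr ⟨c, Ideal.subset_span hc, rfl⟩)
    obtain ⟨u, hu⟩ := hmem a (by simp)
    obtain ⟨v, hv⟩ := hmem b (by simp)
    obtain ⟨w, rfl⟩ := h u v <| IsFractionRing.injective D K <| by
      simp only [map_mul, hu, hv]; ring
    refine (mem_one_iff _).mpr ⟨w, mul_left_cancel₀ haK ?_⟩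
    rw [← map_mul, hu, mul_comm]
  · calc (1 : FractionalIdeal D⁰ K) = 1⁻¹ := by rw [inv_eq, div_one]
      _ ≤ _ := inv_anti_mono hI one_ne_zero coeIdeal_le_one

end FractionalIdeal

theorem vOp_span_pair_mul {d a b : D} (hd : d ≠ 0) (ha : a ≠ 0)
    (h : ∀ u v : D, u * b = v * a → a ∣ u) :
    vOp D K ((Ideal.span {d * a, d * b} : Ideal D) : FractionalIdeal D⁰ K) =
      spanSingleton D⁰ (algebraMap D K d) := by
  have hdK : algebraMap D K d ≠ 0 := IsFractionRing.to_map_eq_zero_iff.not.mpr hd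
  have hspan : (Ideal.span {d * a, d * b} : Ideal D) = Ideal.span {d} * Ideal.span {a, b} := by
    rw [Ideal.span_mul_span', Set.singleton_mul, Set.image_pair]
  rw [vOp, hspan, coeIdeal_mul, coeIdeal_span_singleton, inv_spanSingleton_mul hdK,
    coeIdeal_span_pair_inv_eq_one ha h, mul_one, spanSingleton_inv, inv_inv]

namespace Polynomial

noncomputable abbrev cuspSubalgebra (R : Type*) [CommSemiring R] : Subalgebra R R[X] :=
  Algebra.adjoin R {X ^ 2, X ^ 3}

section CommSemiring

variable {R : Type*} [CommSemiring R]

theorem X_pow_add_two_mem_cuspSubalgebra (n : ℕ) : (X : R[X]) ^ (n + 2) ∈ cuspSubalgebra R := by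
  have hX2 : (X : R[X]) ^ 2 ∈ cuspSubalgebra R := Algebra.subset_adjoin (by simp)
  have hX3 : (X : R[X]) ^ 3 ∈ cuspSubalgebra R := Algebra.subset_adjoin (by simp)
  obtain ⟨k, rfl | rfl⟩ := Nat.even_or_odd' n
  · rw [show 2 * k + 2 = 2 * (k + 1) by ring, pow_mul]
    exact pow_mem hX2 _
  · rw [show 2 * k + 1 + 2 = 2 * k + 3 by ring, pow_add, pow_mul]
    exact mul_mem (pow_mem hX2 _) hX3

theorem mem_cuspSubalgebra_iff {p : R[X]} : p ∈ cuspSubalgebra R ↔ p.coeff 1 = 0 := by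
  constructor
  · intro hp
    induction hp using Algebra.adjoin_induction with
    | mem q hq => rcases hq with rfl | rfl <;> simp [coeff_X_pow]
    | algebraMap r => simp
    | add q r _ _ hq hr => simp [hq, hr]
    | mul q r _ _ hq hr => simp [mul_coeff_one, hq, hr]
  · intro hp
    rw [p.as_sum_support_C_mul_X_pow]
    refine Subalgebra.sum_mem _ fun i _ => ?_
    rw [← smul_eq_C_mul]
    match i with
    | 0 => exact Subalgebra.smul_mem _ (by simp [one_mem]) _
    | 1 => simp [hp]
    | n + 2 => exact Subalgebra.smul_mem _ (X_pow_add_two_mem_cuspSubalgebra n) _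

end CommSemiring

section IsDomain

variable {R : Type*} [CommRing R] [IsDomain R]

theorem not_isIntegrallyClosed_cuspSubalgebra : ¬IsIntegrallyClosed (cuspSubalgebra R) := by
  intro h
  let x2 : cuspSubalgebra R := ⟨X ^ 2, X_pow_add_two_mem_cuspSubalgebra 0⟩
  let x3 : cuspSubalgebra R := ⟨X ^ 3, X_pow_add_two_mem_cuspSubalgebra 1⟩
  have hdvd : x2 ^ 2 ∣ x3 ^ 2 := ⟨x2, Subtype.ext (by simp only [x2, x3]; push_cast; ring)⟩
  obtain ⟨y, hy⟩ := (IsIntegrallyClosed.pow_dvd_pow_iff two_ne_zero).mp hdvd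
  have hyX : (y : R[X]) = X := by
    refine mul_left_cancel₀ (pow_ne_zero 2 X_ne_zero) ?_
    rw [← pow_succ]
    exact (congrArg Subtype.val hy).symm
  simpa [hyX] using mem_cuspSubalgebra_iff.mp y.2

end IsDomain

section CharTwo

variable {R : Type*} [CommRing R] [CharP R 2]

theorem coeff_one_sq (p : R[X]) : (p ^ 2).coeff 1 = 0 := by
  rw [sq, mul_coeff_one, mul_comm (p.coeff 1), CharTwo.add_self_eq_zero]

theorem sq_mem_cuspSubalgebra (p : R[X]) : p ^ 2 ∈ cuspSubalgebra R :=
  mem_cuspSubalgebra_iff.mpr (coeff_one_sq p)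

theorem mem_cuspSubalgebra_of_sq_mul_mem {a b p : R[X]} (hab : IsCoprime a b)
    (ha : a ^ 2 * p ∈ cuspSubalgebra R) (hb : b ^ 2 * p ∈ cuspSubalgebra R) :
    p ∈ cuspSubalgebra R := by
  obtain ⟨s, t, hst⟩ := hab
  have h0 : s.coeff 0 * a.coeff 0 + t.coeff 0 * b.coeff 0 = 1 := by
    simpa using congrArg (coeff · 0) hst
  rw [mem_cuspSubalgebra_iff, mul_coeff_one, coeff_one_sq, zero_mul, add_zero, sq,
    mul_coeff_zero] at ha hb
  rw [mem_cuspSubalgebra_iff]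
  -- `p₁ = (s₀a₀ + t₀b₀)² p₁`, and in characteristic 2 the square has no cross term.
  linear_combination (-(p.coeff 1) * (s.coeff 0 * a.coeff 0 + t.coeff 0 * b.coeff 0 + 1)) * h0
    + s.coeff 0 ^ 2 * ha + t.coeff 0 ^ 2 * hb
    + s.coeff 0 * a.coeff 0 * t.coeff 0 * b.coeff 0 * p.coeff 1 * CharTwo.two_eq_zero (R := R)

theorem exists_eq_sq_mul_of_mul_sq_eq [IsDomain R] {a b u v : R[X]} (hab : IsCoprime a b)
    (ha : a ≠ 0) (hu : u ∈ cuspSubalgebra R) (hv : v ∈ cuspSubalgebra R)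
    (h : u * b ^ 2 = v * a ^ 2) :
    ∃ p ∈ cuspSubalgebra R, u = a ^ 2 * p := by
  obtain ⟨p, rfl⟩ : a ^ 2 ∣ u :=
    (hab.pow (m := 2) (n := 2)).dvd_of_dvd_mul_right ⟨v, by rw [h, mul_comm]⟩
  have hvp : v = b ^ 2 * p := mul_left_cancel₀ (pow_ne_zero 2 ha) (by linear_combination -h)
  exact ⟨p, mem_cuspSubalgebra_of_sq_mul_mem hab hu (hvp ▸ hv), rfl⟩

end CharTwo

theorem isAGCDDomain_cuspSubalgebra {F : Type*} [Field F] [CharP F 2] (K : Type*) [Field K]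
    [Algebra (cuspSubalgebra F) K] [IsFractionRing (cuspSubalgebra F) K] :
    IsAGCDDomain (cuspSubalgebra F) K := by
  intro a b ha hb
  obtain ⟨a', b', g, hab, hga, hgb⟩ :=
    UniqueFactorizationMonoid.exists_reduced_factors' (a : F[X]) b (by simpa using hb)
  have hg : g ≠ 0 := by rintro rfl; exact hb (Subtype.ext (by simp [← hgb]))
  have ha' : a' ≠ 0 := by rintro rfl; exact ha (Subtype.ext (by simp [← hga]))
  let sq' (p : F[X]) : cuspSubalgebra F := ⟨p ^ 2, sq_mem_cuspSubalgebra p⟩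
  have sq'_ne_zero {p : F[X]} (hp : p ≠ 0) : sq' p ≠ 0 :=
    fun h => pow_ne_zero 2 hp (congrArg Subtype.val h)
  have ha2 : a ^ 2 = sq' g * sq' a' := Subtype.ext (by simp [sq', ← hga, mul_pow])
  have hb2 : b ^ 2 = sq' g * sq' b' := Subtype.ext (by simp [sq', ← hgb, mul_pow])
  refine ⟨2, two_pos, sq' g, ?_⟩
  rw [ha2, hb2]
  refine vOp_span_pair_mul (sq'_ne_zero hg) (sq'_ne_zero ha') fun u v huv => ?_
  obtain ⟨p, hp, hup⟩ :=
    exists_eq_sq_mul_of_mul_sq_eq hab.isCoprime ha' u.2 v.2 (congrArg Subtype.val huv)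
  exact ⟨⟨p, hp⟩, Subtype.ext hup⟩

end Polynomial

set_option synthInstance.maxHeartbeats 1000000 in
theorem stmt18 (F : Type*) [Field F] [CharP F 2] :
    (∀ (K : Type) [Field K]
        [Algebra (Algebra.adjoin F ({Polynomial.X ^ 2, Polynomial.X ^ 3} :
          Set (Polynomial F))) K]
        [IsFractionRing (Algebra.adjoin F ({Polynomial.X ^ 2, Polynomial.X ^ 3} :
          Set (Polynomial F))) K],
        IsAGCDDomain (Algebra.adjoin F ({Polynomial.X ^ 2, Polynomial.X ^ 3} :
          Set (Polynomial F))) K) ∧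
      ¬IsIntegrallyClosed (Algebra.adjoin F ({Polynomial.X ^ 2, Polynomial.X ^ 3} :
        Set (Polynomial F))) :=
  ⟨fun K _ _ _ => Polynomial.isAGCDDomain_cuspSubalgebra K,
    Polynomial.not_isIntegrallyClosed_cuspSubalgebra⟩
end
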